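/- arXiv:2405.04827 — 3 statements merged into one kernel-verified Lean document; each statement's English description precedes it below -/
import Mathlib

section
/- For every 3-form φ on a 6-dimensional real vector space V, the dimension of ker φ = {v ∈ V : ι_v φ = 0} belongs to the set {0, 1, 3, 6}; in particular it is never 2, 4 or 5. -/
/-!
Let `K = ker φ` and let `W` be a complement. Vectors of `K` can be dropped from any argument of
`φ`, so the restriction of `φ` to `W` has trivial kernel, and a nonzero `p`-form has a kernel of
codimension at least `p`; hence `dim K ≤ 3` unless `φ = 0`. The case `dim K = 2` is excluded
because then `dim W = 4`, and on a 4-dimensional space every 3-form is `ι_w vol` for some `w`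
(the map `w ↦ ι_w vol` is injective between spaces of dimension 4), so `w` lies in its kernel.
-/

open Module

namespace AlternatingMap

section CommRing

variable {R M N : Type*} [CommRing R] [AddCommGroup M] [Module R M] [AddCommGroup N] [Module R N]
  {n : ℕ}

theorem curryLeft_eq_zero_iff (f : M [⋀^Fin (n + 1)]→ₗ[R] N) : f.curryLeft = 0 ↔ f = 0 := by
  refine ⟨fun h => ext fun v => ?_, fun h => h ▸ curryLeft_zero⟩
  simpa [Matrix.vecCons, Fin.cons_self_tail] using
    DFunLike.congr_fun (LinearMap.congr_fun h (v 0)) (Fin.tail v)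

theorem curryLeft_curryLeft_swap (f : M [⋀^Fin (n + 2)]→ₗ[R] N) (x y : M) :
    (f.curryLeft x).curryLeft y = -(f.curryLeft y).curryLeft x := by
  ext v
  have hswap : Matrix.vecCons y (Matrix.vecCons x v) ∘ Equiv.swap 0 1 =
      Matrix.vecCons x (Matrix.vecCons y v) := by
    funext i
    refine Fin.cases ?_ (fun j => Fin.cases ?_ (fun k => ?_) j) i <;>
      simp [Equiv.swap_apply_def, Fin.succ_succ_ne_one]
  simp only [curryLeft_apply_apply, neg_apply, ← hswap]
  exact f.map_swap _ Fin.zero_ne_one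

theorem ker_curryLeft_le_ker_curryLeft_curryLeft (f : M [⋀^Fin (n + 2)]→ₗ[R] N) (x : M) :
    LinearMap.ker f.curryLeft ≤ LinearMap.ker (f.curryLeft x).curryLeft := fun y hy => by
  rw [LinearMap.mem_ker, curryLeft_curryLeft_swap, LinearMap.mem_ker.1 hy, curryLeft_zero,
    LinearMap.zero_apply, neg_zero]

theorem eq_zero_of_sup_eq_top (f : M [⋀^Fin (n + 1)]→ₗ[R] N) {U W : Submodule R M}
    (hUW : U ⊔ W = ⊤) (hU : U ≤ LinearMap.ker f.curryLeft)
    (hW : f.compLinearMap W.subtype = 0) : f = 0 := by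
  have of_vanishing_on_W {m : ℕ} (g : M [⋀^Fin (m + 1)]→ₗ[R] N)
      (hU : U ≤ LinearMap.ker g.curryLeft) (hW : ∀ w ∈ W, g.curryLeft w = 0) : g = 0 := by
    rw [← curryLeft_eq_zero_iff, ← LinearMap.ker_eq_top, eq_top_iff, ← hUW]
    exact sup_le hU hW
  induction n with
  | zero =>
    refine of_vanishing_on_W f hU fun w hw => ext fun v => ?_
    rw [Subsingleton.elim v ![], zero_apply]
    exact (congrArg f (funext fun i => by fin_cases i; rfl)).trans
      (DFunLike.congr_fun hW ![⟨w, hw⟩])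
  | succ n ih =>
    refine of_vanishing_on_W f hU fun w hw => ih (f.curryLeft w) (fun u hu => ?_) ?_
    · exact ker_curryLeft_le_ker_curryLeft_curryLeft f w (hU hu)
    · simpa [hW] using (curryLeft_compLinearMap W.subtype f ⟨w, hw⟩).symm

theorem ker_curryLeft_compLinearMap_subtype_eq_bot (f : M [⋀^Fin (n + 2)]→ₗ[R] N)
    {W : Submodule R M} (hW : IsCompl (LinearMap.ker f.curryLeft) W) :
    LinearMap.ker (f.compLinearMap W.subtype).curryLeft = ⊥ := by
  refine (Submodule.eq_bot_iff _).2 fun w hw => Subtype.ext ?_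
  have hfw : f.curryLeft w = 0 := by
    refine eq_zero_of_sup_eq_top (f.curryLeft w) hW.sup_eq_top
      (ker_curryLeft_le_ker_curryLeft_curryLeft f w) ?_
    simpa using hw
  exact Submodule.disjoint_def.1 hW.disjoint w hfw w.2

end CommRing

section Field

variable {k M N : Type*} [Field k] [AddCommGroup M] [Module k M] [FiniteDimensional k M]
  [AddCommGroup N] [Module k N] {n : ℕ}

theorem eq_zero_of_finrank_lt_card {ι : Type*} [Fintype ι] (f : M [⋀^ι]→ₗ[k] N)
    (h : finrank k M < Fintype.card ι) : f = 0 :=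
  ext fun v => f.map_linearDependent v fun hv => hv.fintype_card_le_finrank.not_gt h

theorem finrank_ker_curryLeft_add_le (f : M [⋀^Fin (n + 1)]→ₗ[k] N) (hf : f ≠ 0) :
    finrank k (LinearMap.ker f.curryLeft) + (n + 1) ≤ finrank k M := by
  obtain ⟨W, hW⟩ := (LinearMap.ker f.curryLeft).exists_isCompl
  have hfW : f.compLinearMap W.subtype ≠ 0 := fun h =>
    hf (eq_zero_of_sup_eq_top f hW.sup_eq_top le_rfl h)
  have hdegree : n + 1 ≤ finrank k W := by
    by_contra! hlt
    exact hfW (eq_zero_of_finrank_lt_card _ (by simpa using hlt))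
  rw [← Submodule.finrank_add_eq_of_isCompl hW]
  omega

theorem finrank_alternatingMap_fin_eq (n : ℕ) :
    finrank k (M [⋀^Fin n]→ₗ[k] k) = (finrank k M).choose n := by
  rw [exteriorPower.alternatingMapLinearEquiv.finrank_eq, finrank_linearMap_self,
    exteriorPower.finrank_eq]

theorem ker_curryLeft_ne_bot_of_finrank_eq (f : M [⋀^Fin (n + 1)]→ₗ[k] k)
    (h : finrank k M = n + 2) : LinearMap.ker f.curryLeft ≠ ⊥ := by
  let b := finBasisOfFinrankEq k M h
  have hvol : LinearMap.ker b.det.curryLeft = ⊥ := by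
    have := finrank_ker_curryLeft_add_le b.det b.det_ne_zero
    exact Submodule.finrank_eq_zero.1 (by omega)
  have hdim : finrank k M = finrank k (M [⋀^Fin (n + 1)]→ₗ[k] k) := by
    rw [finrank_alternatingMap_fin_eq, h, Nat.choose_succ_self_right]
  have : FiniteDimensional k (M [⋀^Fin (n + 1)]→ₗ[k] k) :=
    Module.Finite.equiv exteriorPower.alternatingMapLinearEquiv.symm
  obtain ⟨w, rfl⟩ := (LinearMap.injective_iff_surjective_of_finrank_eq_finrank hdim).1
    (LinearMap.ker_eq_bot.1 hvol) f
  rcases eq_or_ne w 0 with rfl | hw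
  · have := Module.nontrivial_of_finrank_eq_succ h
    rw [LinearMap.map_zero, curryLeft_zero, LinearMap.ker_zero]
    exact top_ne_bot
  · exact fun hbot => hw ((Submodule.eq_bot_iff _).1 hbot w (curryLeft_same _ _))

end Field

end AlternatingMap

open AlternatingMap in
/-- For every 3-form φ on a 6-dimensional real vector space V, the dimension of
ker φ = {v ∈ V : ι_v φ = 0} belongs to {0, 1, 3, 6}. -/
theorem stmt_6 {V : Type*} [AddCommGroup V] [Module ℝ V] [FiniteDimensional ℝ V]
    (hdim : Module.finrank ℝ V = 6)
    (φ : V [⋀^Fin 3]→ₗ[ℝ] ℝ) :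
    Module.finrank ℝ (LinearMap.ker φ.curryLeft) ∈ ({0, 1, 3, 6} : Set ℕ) := by
  by_cases hφ : φ = 0
  · rw [hφ, curryLeft_zero, LinearMap.ker_zero, finrank_top, hdim]
    simp
  have hle : finrank ℝ (LinearMap.ker φ.curryLeft) + 3 ≤ 6 :=
    hdim ▸ finrank_ker_curryLeft_add_le φ hφ
  have hne : finrank ℝ (LinearMap.ker φ.curryLeft) ≠ 2 := by
    intro h2
    obtain ⟨W, hW⟩ := (LinearMap.ker φ.curryLeft).exists_isCompl
    have hW4 : finrank ℝ W = 4 := by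
      have := Submodule.finrank_add_eq_of_isCompl hW
      omega
    exact ker_curryLeft_ne_bot_of_finrank_eq _ hW4
      (ker_curryLeft_compLinearMap_subtype_eq_bot φ hW)
  simp only [Set.mem_insert_iff, Set.mem_singleton_iff]
  omega
end

section
/- Let λ, M, N be real numbers with λ ≠ 0. There is no pair of differentiable functions u, v : [0, ∞) → ℝ satisfying u'(t) = 2λ²·u(t)·(v(t) − (M−N)²) and v'(t) = 2λ²·v(t)·(u(t) − (M+N)²) for all t ≥ 0 together with the initial conditions u(0) > 0, v(0) > 0 and u(0)·v(0) > u(0)·(M−N)² + v(0)·(M+N)²; that is, every solution of this ODE system with such initial data develops a singularity in finite time. -/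
open Set Filter

private lemma mono_Icc' {f f' : ℝ → ℝ} {A B : ℝ} (hAB : A ≤ B)
    (hf : ∀ t ∈ Set.Icc A B, HasDerivWithinAt f (f' t) (Set.Icc A B) t)
    (h0 : ∀ t ∈ Set.Icc A B, 0 ≤ f' t) : f A ≤ f B := by
  have hmono : MonotoneOn f (Set.Icc A B) := by
    apply monotoneOn_of_deriv_nonneg (convex_Icc A B)
      (fun t ht => (hf t ht).continuousWithinAt)
    · intro t ht
      rw [interior_Icc] at ht
      exact ((hf t (Set.mem_Icc_of_Ioo ht)).hasDerivAt
        (Icc_mem_nhds ht.1 ht.2)).differentiableAt.differentiableWithinAt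
    · intro t ht
      rw [interior_Icc] at ht
      rw [((hf t (Set.mem_Icc_of_Ioo ht)).hasDerivAt (Icc_mem_nhds ht.1 ht.2)).deriv]
      exact h0 t (Set.mem_Icc_of_Ioo ht)
  exact hmono (Set.left_mem_Icc.2 hAB) (Set.right_mem_Icc.2 hAB) hAB

private lemma mono_Ici' {f f' : ℝ → ℝ} {A B : ℝ} (hA : 0 ≤ A) (hAB : A ≤ B)
    (hf : ∀ t ∈ Set.Ici (0:ℝ), HasDerivWithinAt f (f' t) (Set.Ici 0) t)
    (h0 : ∀ t ∈ Set.Icc A B, 0 ≤ f' t) : f A ≤ f B :=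
  mono_Icc' hAB (fun t ht => (hf t (hA.trans ht.1)).mono (fun x hx => hA.trans hx.1)) h0

private lemma nonvanish' {f g : ℝ → ℝ} {T : ℝ} (hT : 0 ≤ T)
    (hf : ∀ t ∈ Set.Icc 0 T, HasDerivWithinAt f (g t * f t) (Set.Icc 0 T) t)
    (hg : ContinuousOn g (Set.Icc 0 T))
    (hnn : ∀ t ∈ Set.Icc 0 T, 0 ≤ f t) (h0 : 0 < f 0) : 0 < f T := by
  obtain ⟨K, hK⟩ := isCompact_Icc.exists_bound_of_continuousOn hg
  have key : f 0 * Real.exp (K * 0) ≤ f T * Real.exp (K * T) := by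
    apply mono_Icc' (f := fun t => f t * Real.exp (K * t)) (f' := fun t => (g t * f t + K * f t) * Real.exp (K * t)) hT
    · intro t ht
      have hexp : HasDerivAt (fun x : ℝ => Real.exp (K * x)) (Real.exp (K * t) * K) t := by
        simpa using ((hasDerivAt_id t).const_mul K).exp
      have h := (hf t ht).mul hexp.hasDerivWithinAt
      exact h.congr_deriv (by ring)
    · intro t ht
      have h1 := hnn t ht
      have h2 := (abs_le.mp (by simpa using hK t ht)).1
      have h3 := (Real.exp_pos (K * t)).le
      have h4 : 0 ≤ (g t + K) * f t := mul_nonneg (by linarith) h1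
      nlinarith
  rw [mul_zero, Real.exp_zero, mul_one] at key
  by_contra hle
  push_neg at hle
  nlinarith [mul_nonpos_of_nonpos_of_nonneg hle (Real.exp_pos (K * T)).le]
set_option maxHeartbeats 2000000 in
/-- Let λ, M, N be real with λ ≠ 0. There is no pair of differentiable functions
u, v : [0,∞) → ℝ with u' = 2λ²·u·(v − (M−N)²), v' = 2λ²·v·(u − (M+N)²) on [0,∞) and
u(0) > 0, v(0) > 0, u(0)·v(0) > u(0)·(M−N)² + v(0)·(M+N)²: every such solution develops a
singularity in finite time. -/
theorem stmt_18 (lam M N : ℝ) (hlam : lam ≠ 0) :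
    ¬ ∃ u v : ℝ → ℝ,
      (∀ t ∈ Set.Ici (0 : ℝ),
        HasDerivWithinAt u (2 * lam ^ 2 * u t * (v t - (M - N) ^ 2)) (Set.Ici 0) t) ∧
      (∀ t ∈ Set.Ici (0 : ℝ),
        HasDerivWithinAt v (2 * lam ^ 2 * v t * (u t - (M + N) ^ 2)) (Set.Ici 0) t) ∧
      0 < u 0 ∧ 0 < v 0 ∧
      u 0 * (M - N) ^ 2 + v 0 * (M + N) ^ 2 < u 0 * v 0 := by
  rintro ⟨u, v, hu, hv, hu0, hv0, hinit⟩
  set c := 2 * lam ^ 2 with hc_def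
  set a := (M - N) ^ 2 with ha_def
  set b := (M + N) ^ 2 with hb_def
  have hc : 0 < c := by rw [hc_def]; positivity
  have ha : 0 ≤ a := by rw [ha_def]; positivity
  have hb : 0 ≤ b := by rw [hb_def]; positivity
  clear_value c a b
  have hu_cont : ContinuousOn u (Set.Ici 0) := fun t ht => (hu t ht).continuousWithinAt
  have hv_cont : ContinuousOn v (Set.Ici 0) := fun t ht => (hv t ht).continuousWithinAt
  -- Step 1: positivity of u and v on [0, ∞)
  have hpos : ∀ t, 0 ≤ t → 0 < u t ∧ 0 < v t := by
    by_contra hcon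
    push_neg at hcon
    obtain ⟨t0, ht0, hbad⟩ := hcon
    set S : Set ℝ := {t | 0 ≤ t ∧ (u t ≤ 0 ∨ v t ≤ 0)} with hS_def
    have ht0S : t0 ∈ S := by
      refine ⟨ht0, ?_⟩
      rcases le_or_gt (u t0) 0 with h | h
      · exact Or.inl h
      · exact Or.inr (hbad h)
    have hS_bdd : BddBelow S := ⟨0, fun x hx => hx.1⟩
    have hS_closed : IsClosed S := by
      have hSeq : S = (Set.Ici 0 ∩ u ⁻¹' Set.Iic 0) ∪ (Set.Ici 0 ∩ v ⁻¹' Set.Iic 0) := by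
        ext t
        simp only [hS_def, Set.mem_setOf_eq, Set.mem_union, Set.mem_inter_iff, Set.mem_Ici,
          Set.mem_preimage, Set.mem_Iic]
        tauto
      rw [hSeq]
      exact (hu_cont.preimage_isClosed_of_isClosed isClosed_Ici isClosed_Iic).union
        (hv_cont.preimage_isClosed_of_isClosed isClosed_Ici isClosed_Iic)
    have ht1S : sInf S ∈ S := hS_closed.csInf_mem ⟨t0, ht0S⟩ hS_bdd
    set t1 := sInf S with ht1_def
    have ht1_nonneg : 0 ≤ t1 := ht1S.1
    have hbefore : ∀ t, 0 ≤ t → t < t1 → 0 < u t ∧ 0 < v t := by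
      intro t ht htlt
      by_contra hcon2
      push_neg at hcon2
      have htS : t ∈ S := by
        refine ⟨ht, ?_⟩
        rcases le_or_gt (u t) 0 with h | h
        · exact Or.inl h
        · exact Or.inr (hcon2 h)
      exact absurd (csInf_le hS_bdd htS) (not_le.2 htlt)
    have ht1pos : 0 < t1 := by
      rcases ht1_nonneg.lt_or_eq with h | h
      · exact h
      · exfalso
        rcases ht1S.2 with h2 | h2 <;> rw [← h] at h2 <;> linarith
    have hboundary : 0 ≤ u t1 ∧ 0 ≤ v t1 := by
      have hmem : t1 ∈ closure (Set.Ico (0:ℝ) t1) := by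
        rw [closure_Ico ht1pos.ne]
        exact Set.right_mem_Icc.2 ht1_nonneg
      haveI hne : (nhdsWithin t1 (Set.Ico (0:ℝ) t1)).NeBot :=
        mem_closure_iff_nhdsWithin_neBot.mp hmem
      have htu : Filter.Tendsto u (nhdsWithin t1 (Set.Ico (0:ℝ) t1)) (nhds (u t1)) :=
        (hu_cont t1 ht1_nonneg).mono Set.Ico_subset_Ici_self
      have htv : Filter.Tendsto v (nhdsWithin t1 (Set.Ico (0:ℝ) t1)) (nhds (v t1)) :=
        (hv_cont t1 ht1_nonneg).mono Set.Ico_subset_Ici_self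
      constructor
      · exact ge_of_tendsto htu (Filter.eventually_of_mem self_mem_nhdsWithin
          (fun x hx => (hbefore x hx.1 hx.2).1.le))
      · exact ge_of_tendsto htv (Filter.eventually_of_mem self_mem_nhdsWithin
          (fun x hx => (hbefore x hx.1 hx.2).2.le))
    have hnn : ∀ t ∈ Set.Icc (0:ℝ) t1, 0 ≤ u t ∧ 0 ≤ v t := by
      intro t ht
      rcases ht.2.lt_or_eq with h | h
      · exact ⟨(hbefore t ht.1 h).1.le, (hbefore t ht.1 h).2.le⟩
      · rw [h]; exact hboundary
    rcases ht1S.2 with hcase | hcase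
    · have hposu : 0 < u t1 := by
        apply nonvanish' (g := fun t => c * (v t - a)) ht1_nonneg
        · intro t ht
          have h := (hu t ht.1).mono
            (Set.Icc_subset_Ici_self : Set.Icc (0:ℝ) t1 ⊆ Set.Ici 0)
          exact h.congr_deriv (by ring)
        · exact continuousOn_const.mul ((hv_cont.mono Set.Icc_subset_Ici_self).sub
            continuousOn_const)
        · exact fun t ht => (hnn t ht).1
        · exact hu0
      linarith
    · have hposv : 0 < v t1 := by
        apply nonvanish' (g := fun t => c * (u t - b)) ht1_nonneg
        · intro t ht
          have h := (hv t ht.1).mono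
            (Set.Icc_subset_Ici_self : Set.Icc (0:ℝ) t1 ⊆ Set.Ici 0)
          exact h.congr_deriv (by ring)
        · exact continuousOn_const.mul ((hu_cont.mono Set.Icc_subset_Ici_self).sub
            continuousOn_const)
        · exact fun t ht => (hnn t ht).2
        · exact hv0
      linarith
  have hppos : ∀ t, 0 ≤ t → 0 < u t * v t := fun t ht => mul_pos (hpos t ht).1 (hpos t ht).2
  -- Step 2: E = uv - au - bv is nondecreasing
  have hE : ∀ t ∈ Set.Ici (0:ℝ), HasDerivWithinAt (fun t => u t * v t - (u t * a + v t * b))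
      (c * (u t * (v t - a) ^ 2 + v t * (u t - b) ^ 2)) (Set.Ici 0) t := by
    intro t ht
    have h := ((hu t ht).mul (hv t ht)).sub (((hu t ht).mul_const a).add ((hv t ht).mul_const b))
    exact h.congr_deriv (by ring)
  have hE_lb : ∀ T, 0 ≤ T →
      u 0 * v 0 - (u 0 * a + v 0 * b) ≤ u T * v T - (u T * a + v T * b) := by
    intro T hT
    exact mono_Ici' le_rfl hT hE (fun t ht => mul_nonneg hc.le (add_nonneg
      (mul_nonneg (hpos t ht.1).1.le (sq_nonneg _)) (mul_nonneg (hpos t ht.1).2.le (sq_nonneg _))))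
  have hp_lb : ∀ T, 0 ≤ T → u 0 * v 0 - (u 0 * a + v 0 * b) ≤ u T * v T := by
    intro T hT
    have h1 := hE_lb T hT
    have h2 := hpos T hT
    nlinarith [mul_nonneg h2.1.le ha, mul_nonneg h2.2.le hb]
  set E0 := u 0 * v 0 - (u 0 * a + v 0 * b) with hE0_def
  clear_value E0
  have hE0pos : 0 < E0 := by rw [hE0_def]; linarith
  -- Step 3: linear growth of u + v
  have hS_deriv : ∀ t ∈ Set.Ici (0:ℝ), HasDerivWithinAt (fun t => u t + v t - 2 * c * E0 * t)
      (c * u t * (v t - a) + c * v t * (u t - b) - 2 * c * E0) (Set.Ici 0) t := by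
    intro t ht
    have hlin : HasDerivAt (fun x : ℝ => 2 * c * E0 * x) (2 * c * E0) t := by
      simpa using (hasDerivAt_id t).const_mul (2 * c * E0)
    have h := ((hu t ht).add (hv t ht)).sub hlin.hasDerivWithinAt
    exact h
  have hS_lb : ∀ T, 0 ≤ T → u 0 + v 0 + 2 * c * E0 * T ≤ u T + v T := by
    intro T hT
    have h : u 0 + v 0 - 2 * c * E0 * 0 ≤ u T + v T - 2 * c * E0 * T := by
      apply mono_Ici' le_rfl hT hS_deriv
      intro t ht
      have h1 := hE_lb t ht.1
      have h2 := hp_lb t ht.1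
      nlinarith [mul_le_mul_of_nonneg_left h1 hc.le, mul_le_mul_of_nonneg_left h2 hc.le]
    nlinarith
  set T1 : ℝ := max 0 ((a + b + 1 - (u 0 + v 0)) / (2 * c * E0)) with hT1_def
  have hT1_nonneg : 0 ≤ T1 := le_max_left _ _
  clear_value T1
  have h2cE0 : 0 < 2 * c * E0 := by positivity
  have hs1 : ∀ t, T1 ≤ t → a + b + 1 ≤ u t + v t := by
    intro t ht
    have ht0 : 0 ≤ t := hT1_nonneg.trans ht
    have h1 := hS_lb t ht0
    have h2 : (a + b + 1 - (u 0 + v 0)) / (2 * c * E0) ≤ t := by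
      refine le_trans ?_ ht
      rw [hT1_def]
      exact le_max_right _ _
    rw [div_le_iff₀ h2cE0] at h2
    nlinarith
  -- Step 4: p = uv, derivative, monotonicity past T1, exponential growth
  have hP : ∀ t ∈ Set.Ici (0:ℝ), HasDerivWithinAt (fun t => u t * v t)
      (c * (u t * v t) * (u t + v t - a - b)) (Set.Ici 0) t := by
    intro t ht
    have h := (hu t ht).mul (hv t ht)
    exact h.congr_deriv (by ring)
  have hP_nonneg : ∀ t, T1 ≤ t → 0 ≤ c * (u t * v t) * (u t + v t - a - b) := by
    intro t ht
    have h1 := hs1 t ht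
    exact mul_nonneg (mul_nonneg hc.le (hppos t (hT1_nonneg.trans ht)).le) (by linarith)
  have hp_mono : ∀ s t, T1 ≤ s → s ≤ t → u s * v s ≤ u t * v t := by
    intro s t hs hst
    exact mono_Ici' (hT1_nonneg.trans hs) hst hP (fun x hx => hP_nonneg x (hs.trans hx.1))
  have hF : ∀ t ∈ Set.Ici (0:ℝ), HasDerivWithinAt (fun t => u t * v t * Real.exp (-(c * t)))
      ((c * (u t * v t) * (u t + v t - a - b)) * Real.exp (-(c * t)) +
        (u t * v t) * (Real.exp (-(c * t)) * (-c))) (Set.Ici 0) t := by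
    intro t ht
    have hlin : HasDerivAt (fun x : ℝ => -(c * x)) (-c) t := by
      exact ((hasDerivAt_id t).const_mul c).neg.congr_deriv (by ring)
    exact (hP t ht).mul hlin.exp.hasDerivWithinAt
  have hexp_growth : ∀ t, T1 ≤ t →
      u T1 * v T1 * Real.exp (-(c * T1)) ≤ u t * v t * Real.exp (-(c * t)) := by
    intro t ht
    apply mono_Ici' hT1_nonneg ht hF
    intro x hx
    have h1 := hs1 x hx.1
    have h2 := (hppos x (hT1_nonneg.trans hx.1)).le
    have h3 := (Real.exp_pos (-(c * x))).le
    have key : 0 ≤ (c * (u x * v x) * (u x + v x - a - b - 1)) * Real.exp (-(c * x)) :=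
      mul_nonneg (mul_nonneg (mul_nonneg hc.le h2) (by linarith)) h3
    nlinarith [key]
  set Q := (a + b + 1) ^ 2 with hQ_def
  clear_value Q
  have hQ0 : 0 ≤ Q := by rw [hQ_def]; positivity
  have hpT1 : 0 < u T1 * v T1 := hppos T1 hT1_nonneg
  set T2 := T1 + Q / (c * (u T1 * v T1)) with hT2_def
  clear_value T2
  have hT2_ge : T1 ≤ T2 := by
    rw [hT2_def]
    exact le_add_of_nonneg_right (div_nonneg hQ0 (mul_pos hc hpT1).le)
  have hT2_nonneg : 0 ≤ T2 := hT1_nonneg.trans hT2_ge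
  have hpT2 : Q ≤ u T2 * v T2 := by
    have h1 := hexp_growth T2 hT2_ge
    have hE2 : Real.exp (-(c * T1)) = Real.exp (-(c * T2)) * Real.exp (c * (T2 - T1)) := by
      rw [← Real.exp_add]
      ring_nf
    have h3 : u T1 * v T1 * Real.exp (c * (T2 - T1)) ≤ u T2 * v T2 := by
      have he := Real.exp_pos (-(c * T2))
      rw [hE2] at h1
      nlinarith [h1, he]
    have h4 : c * (T2 - T1) + 1 ≤ Real.exp (c * (T2 - T1)) := Real.add_one_le_exp _
    have h5 : c * (T2 - T1) = Q / (u T1 * v T1) := by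
      rw [hT2_def]
      field_simp
      ring
    have h6 : u T1 * v T1 * (Q / (u T1 * v T1)) = Q := by field_simp; exact mul_div_cancel_left₀ _ hpT1.ne'
    have h7 : u T1 * v T1 * (c * (T2 - T1) + 1) ≤ u T1 * v T1 * Real.exp (c * (T2 - T1)) :=
      mul_le_mul_of_nonneg_left h4 hpT1.le
    have h8 : Q ≤ u T1 * v T1 * (c * (T2 - T1) + 1) := by
      rw [h5]
      nlinarith [h6, hpT1]
    linarith
  -- Step 5: blow-up of 1/sqrt(p)
  have hY : ∀ t ∈ Set.Ici (0:ℝ), HasDerivWithinAt (fun t => (Real.sqrt (u t * v t))⁻¹)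
      (-(c * (u t * v t) * (u t + v t - a - b) / (2 * Real.sqrt (u t * v t))) /
        Real.sqrt (u t * v t) ^ 2) (Set.Ici 0) t := by
    intro t ht
    have hp := hppos t ht
    have hsq : HasDerivWithinAt (fun t => Real.sqrt (u t * v t))
        (c * (u t * v t) * (u t + v t - a - b) / (2 * Real.sqrt (u t * v t))) (Set.Ici 0) t :=
      (hP t ht).sqrt hp.ne'
    exact hsq.inv (Real.sqrt_pos.mpr hp).ne'
  have hG : ∀ t ∈ Set.Ici (0:ℝ), HasDerivWithinAt
      (fun t => -(Real.sqrt (u t * v t))⁻¹ - c / 2 * t)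
      (-(-(c * (u t * v t) * (u t + v t - a - b) / (2 * Real.sqrt (u t * v t))) /
        Real.sqrt (u t * v t) ^ 2) - c / 2) (Set.Ici 0) t := by
    intro t ht
    have hlin : HasDerivAt (fun x : ℝ => c / 2 * x) (c / 2) t := by
      simpa using (hasDerivAt_id t).const_mul (c / 2)
    exact ((hY t ht).neg).sub hlin.hasDerivWithinAt
  have hG_nonneg : ∀ t, T2 ≤ t →
      0 ≤ -(-(c * (u t * v t) * (u t + v t - a - b) / (2 * Real.sqrt (u t * v t))) /
        Real.sqrt (u t * v t) ^ 2) - c / 2 := by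
    intro t ht
    have ht0 : 0 ≤ t := hT2_nonneg.trans ht
    have hp := hppos t ht0
    have hsq : 0 < Real.sqrt (u t * v t) := Real.sqrt_pos.mpr hp
    have hpQ : Q ≤ u t * v t := le_trans hpT2 (hp_mono T2 t hT2_ge ht)
    have hsqge : a + b + 1 ≤ Real.sqrt (u t * v t) := by
      have h := Real.sqrt_le_sqrt hpQ
      rwa [hQ_def, Real.sqrt_sq (by linarith)] at h
    have hsum : 2 * Real.sqrt (u t * v t) ≤ u t + v t := by
      have h1 := Real.sq_sqrt (hpos t ht0).1.le
      have h2 := Real.sq_sqrt (hpos t ht0).2.le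
      have h3 : Real.sqrt (u t) * Real.sqrt (v t) = Real.sqrt (u t * v t) :=
        (Real.sqrt_mul (hpos t ht0).1.le _).symm
      nlinarith [sq_nonneg (Real.sqrt (u t) - Real.sqrt (v t))]
    have hkey : c * (u t * v t) * Real.sqrt (u t * v t) ≤
        c * (u t * v t) * (u t + v t - a - b) := by
      apply mul_le_mul_of_nonneg_left ?_ (mul_nonneg hc.le hp.le)
      linarith
    have hS2 : Real.sqrt (u t * v t) ^ 2 = u t * v t := Real.sq_sqrt hp.le
    rw [hS2, sub_nonneg, neg_div, neg_neg, div_div, le_div_iff₀ (by positivity : (0:ℝ) <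
      2 * Real.sqrt (u t * v t) * (u t * v t))]
    nlinarith [hkey]
  set y2 := (Real.sqrt (u T2 * v T2))⁻¹ with hy2_def
  clear_value y2
  have hy2 : 0 < y2 := by
    rw [hy2_def]
    exact inv_pos.mpr (Real.sqrt_pos.mpr (hppos T2 hT2_nonneg))
  set T3 := T2 + 2 / c * y2 + 1 with hT3_def
  clear_value T3
  have hT3_ge : T2 ≤ T3 := by
    rw [hT3_def]
    have h : 0 ≤ 2 / c * y2 := mul_nonneg (div_nonneg (by norm_num) hc.le) hy2.le
    linarith
  have hT3_nonneg : 0 ≤ T3 := hT2_nonneg.trans hT3_ge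
  have hmain : -(Real.sqrt (u T2 * v T2))⁻¹ - c / 2 * T2 ≤
      -(Real.sqrt (u T3 * v T3))⁻¹ - c / 2 * T3 :=
    mono_Ici' hT2_nonneg hT3_ge hG (fun t ht => hG_nonneg t ht.1)
  have hy3 : 0 < (Real.sqrt (u T3 * v T3))⁻¹ :=
    inv_pos.mpr (Real.sqrt_pos.mpr (hppos T3 hT3_nonneg))
  have harith : c / 2 * T3 - c / 2 * T2 = y2 + c / 2 := by
    rw [hT3_def]
    field_simp
    ring
  rw [hy2_def] at harith hy2
  linarith
end

section
/- Let λ, M, N be real numbers with λ ≠ 0, let 0 < T < ∞, and let u, v : [0, T) → ℝ be differentiable functions satisfying u'(t) = 2λ²·u(t)·(v(t) − (M−N)²) and v'(t) = 2λ²·v(t)·(u(t) − (M+N)²) for all t ∈ [0, T), together with u(0) > 0, v(0) > 0 and u(0)·v(0) > u(0)·(M−N)² + v(0)·(M+N)². If the solution blows up at time T, i.e. at least one of u, v is unbounded on [0, T), then both u(t) → +∞ and v(t) → +∞ as t → T⁻, and the ratio u(t)/v(t) → 1 as t → T⁻. -/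
/-!
Write the system as `u' = c u (v - a)`, `v' = c v (u - b)` with `c = 2λ² > 0`, `a = (M-N)²`,
`b = (M+N)²`. The initial condition places `(u, v)` in the quadrant `u > b`, `v > a`, where both
rates are positive; so the quadrant is invariant and `u`, `v` increase. Since
`|u'| ≤ |c| (|v| + |a|) |u|`, Grönwall shows that a bounded `v` keeps `u` bounded and vice
versa, so both components are unbounded and increase to `+∞`. Finally the Lotka–Volterra first
integral `u - v - b log u + a log v` is conserved, so `u - v` grows only logarithmically, which
is `o(u + v)`; hence `u / v → 1`.
-/

open Filter Set Real Topology Asymptotics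

section Interval

variable {T : ℝ} {u g : ℝ → ℝ}

lemma HasDerivWithinAt.Ici_of_Ico {d t : ℝ} (h : HasDerivWithinAt u d (Ico 0 T) t)
    (ht : t ∈ Ico 0 T) : HasDerivWithinAt u d (Ici t) t :=
  h.mono_of_mem_nhdsWithin <|
    mem_of_superset (Ico_mem_nhdsGE ht.2) fun _ hx => ⟨ht.1.trans hx.1, hx.2⟩

lemma strictMonoOn_of_hasDerivWithinAt_Ico_pos {D : Set ℝ} (hD : Convex ℝ D)
    (hDT : D ⊆ Ico 0 T) (hu : ∀ t ∈ Ico 0 T, HasDerivWithinAt u (g t) (Ico 0 T) t)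
    (hg : ∀ t ∈ interior D, 0 < g t) : StrictMonoOn u D :=
  strictMonoOn_of_hasDerivWithinAt_pos hD
    (fun t ht => (hu t (hDT ht)).continuousWithinAt.mono hDT)
    (fun t ht => (hu t (hDT (interior_subset ht))).mono (interior_subset.trans hDT)) hg

lemma forall_pos_of_forall_Ico_pos_imp {f : ℝ → ℝ} (hf : ContinuousOn f (Ico 0 T))
    (h0 : 0 < f 0) (hstep : ∀ s ∈ Ioo 0 T, (∀ x ∈ Ico 0 s, 0 < f x) → 0 < f s) :
    ∀ t ∈ Ico 0 T, 0 < f t := by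
  intro t ht
  by_contra! hft
  set Z := Icc 0 t ∩ f ⁻¹' Iic 0
  have hZbdd : BddBelow Z := ⟨0, fun x hx => hx.1.1⟩
  have hZ : IsClosed Z := (hf.mono (Icc_subset_Ico_right ht.2)).preimage_isClosed_of_isClosed
    isClosed_Icc isClosed_Iic
  obtain ⟨⟨hs0, hst⟩, hfs⟩ : sInf Z ∈ Z :=
    hZ.csInf_mem ⟨t, ⟨ht.1, le_rfl⟩, hft⟩ hZbdd
  have hspos : 0 < sInf Z := hs0.lt_of_ne fun h => h0.not_ge (h ▸ hfs)
  refine (hstep _ ⟨hspos, hst.trans_lt ht.2⟩ fun x hx => ?_).not_ge hfs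
  by_contra! hfx
  exact hx.2.not_ge (csInf_le hZbdd ⟨⟨hx.1, hx.2.le.trans hst⟩, hfx⟩)

lemma abs_le_mul_exp_of_abs_deriv_le {K : ℝ}
    (hu : ∀ t ∈ Ico 0 T, HasDerivWithinAt u (g t) (Ico 0 T) t)
    (hg : ∀ t ∈ Ico 0 T, |g t| ≤ K * |u t|) :
    ∀ t ∈ Ico 0 T, |u t| ≤ |u 0| * exp (K * t) := by
  intro t ht
  have hsub : Icc 0 t ⊆ Ico 0 T := Icc_subset_Ico_right ht.2
  have hsub' : Ico 0 t ⊆ Ico 0 T := Ico_subset_Icc_self.trans hsub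
  simpa [gronwallBound_ε0] using norm_le_gronwallBound_of_norm_deriv_right_le (ε := 0)
    (fun x hx => (hu x (hsub hx)).continuousWithinAt.mono hsub)
    (fun x hx => (hu x (hsub' hx)).Ici_of_Ico (hsub' hx)) le_rfl
    (fun x hx => by simpa using hg x (hsub' hx)) t ⟨ht.1, le_rfl⟩

lemma MonotoneOn.tendsto_nhdsLT_atTop (hmono : MonotoneOn u (Ico 0 T))
    (hunb : ¬ ∃ C, ∀ t ∈ Ico 0 T, |u t| ≤ C) : Tendsto u (𝓝[<] T) atTop := by
  refine tendsto_atTop.2 fun C => ?_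
  push Not at hunb
  obtain ⟨t, ht, hCt⟩ := hunb (max C |u 0|)
  have h0t : u 0 ≤ u t := hmono ⟨le_rfl, ht.1.trans_lt ht.2⟩ ht ht.1
  have hCu : C ≤ u t := by
    rw [max_lt_iff] at hCt
    have := neg_abs_le (u 0)
    rcases abs_cases (u t) with ⟨h, _⟩ | ⟨h, _⟩ <;> linarith
  filter_upwards [Ioo_mem_nhdsLT ht.2] with s hs
  exact hCu.trans (hmono ht ⟨ht.1.trans hs.1.le, hs.2⟩ hs.1.le)

end Interval

section LotkaVolterra

variable {c a b T : ℝ} {u v : ℝ → ℝ}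

lemma exists_abs_le_of_hasDerivWithinAt_mul_sub
    (hu : ∀ t ∈ Ico 0 T, HasDerivWithinAt u (c * u t * (v t - a)) (Ico 0 T) t)
    (hv : ∃ C, ∀ t ∈ Ico 0 T, |v t| ≤ C) : ∃ C, ∀ t ∈ Ico 0 T, |u t| ≤ C := by
  obtain ⟨C, hC⟩ := hv
  have hrate : ∀ t ∈ Ico 0 T, |c * u t * (v t - a)| ≤ |c| * (|C| + |a|) * |u t| :=
    fun t ht => by
      have : |v t - a| ≤ |C| + |a| :=
        (abs_sub _ _).trans (by linarith [hC t ht, le_abs_self C])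
      rw [abs_mul, abs_mul, mul_right_comm]
      gcongr
  refine ⟨|u 0| * exp (|c| * (|C| + |a|) * T), fun t ht => ?_⟩
  calc |u t| ≤ |u 0| * exp (|c| * (|C| + |a|) * t) :=
        abs_le_mul_exp_of_abs_deriv_le hu hrate t ht
    _ ≤ |u 0| * exp (|c| * (|C| + |a|) * T) := by gcongr; exact ht.2.le

lemma strictMonoOn_of_lt_of_lt {D : Set ℝ} (hc : 0 < c) (hb : 0 ≤ b) (hD : Convex ℝ D)
    (hDT : D ⊆ Ico 0 T)
    (hu : ∀ t ∈ Ico 0 T, HasDerivWithinAt u (c * u t * (v t - a)) (Ico 0 T) t)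
    (h : ∀ t ∈ interior D, b < u t ∧ a < v t) : StrictMonoOn u D :=
  strictMonoOn_of_hasDerivWithinAt_Ico_pos hD hDT hu fun t ht =>
    mul_pos (mul_pos hc (hb.trans_lt (h t ht).1)) (sub_pos.2 (h t ht).2)

lemma lt_and_lt_of_hasDerivWithinAt (hc : 0 < c) (ha : 0 ≤ a) (hb : 0 ≤ b)
    (hu : ∀ t ∈ Ico 0 T, HasDerivWithinAt u (c * u t * (v t - a)) (Ico 0 T) t)
    (hv : ∀ t ∈ Ico 0 T, HasDerivWithinAt v (c * v t * (u t - b)) (Ico 0 T) t)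
    (hu0 : b < u 0) (hv0 : a < v 0) :
    ∀ t ∈ Ico 0 T, b < u t ∧ a < v t := by
  suffices ∀ t ∈ Ico 0 T, 0 < min (u t - b) (v t - a) by simpa using this
  have hcu : ContinuousOn u (Ico 0 T) := fun t ht => (hu t ht).continuousWithinAt
  have hcv : ContinuousOn v (Ico 0 T) := fun t ht => (hv t ht).continuousWithinAt
  refine forall_pos_of_forall_Ico_pos_imp
    ((hcu.sub continuousOn_const).inf (hcv.sub continuousOn_const))
    (lt_min (sub_pos.2 hu0) (sub_pos.2 hv0)) fun s hs hpos => ?_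
  have hsub : Icc 0 s ⊆ Ico 0 T := Icc_subset_Ico_right hs.2
  have hbefore : ∀ x ∈ interior (Icc 0 s), b < u x ∧ a < v x := fun x hx => by
    rw [interior_Icc] at hx
    simpa using hpos x ⟨hx.1.le, hx.2⟩
  have h0 : (0 : ℝ) ∈ Icc 0 s := ⟨le_rfl, hs.1.le⟩
  have hs' : s ∈ Icc 0 s := ⟨hs.1.le, le_rfl⟩
  have hus := strictMonoOn_of_lt_of_lt hc hb (convex_Icc 0 s) hsub hu hbefore h0 hs' hs.1
  have hvs := strictMonoOn_of_lt_of_lt hc ha (convex_Icc 0 s) hsub hv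
    (fun x hx => (hbefore x hx).symm) h0 hs' hs.1
  exact lt_min (by linarith) (by linarith)

/-- The first integral of the system `u' = c u (v - a)`, `v' = c v (u - b)`. -/
noncomputable def lvIntegral (a b x y : ℝ) : ℝ := x - y - b * log x + a * log y

lemma lvIntegral_eq_of_hasDerivWithinAt
    (hu : ∀ t ∈ Ico 0 T, HasDerivWithinAt u (c * u t * (v t - a)) (Ico 0 T) t)
    (hv : ∀ t ∈ Ico 0 T, HasDerivWithinAt v (c * v t * (u t - b)) (Ico 0 T) t)
    (hupos : ∀ t ∈ Ico 0 T, 0 < u t) (hvpos : ∀ t ∈ Ico 0 T, 0 < v t) :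
    ∀ t ∈ Ico 0 T, lvIntegral a b (u t) (v t) = lvIntegral a b (u 0) (v 0) := by
  have hF : ∀ x ∈ Ico 0 T,
      HasDerivWithinAt (fun s => lvIntegral a b (u s) (v s)) 0 (Ico 0 T) x := fun x hx => by
    have := (((hu x hx).sub (hv x hx)).sub (((hu x hx).log (hupos x hx).ne').const_mul b)).add
      (((hv x hx).log (hvpos x hx).ne').const_mul a)
    have hux := (hupos x hx).ne'
    have hvx := (hvpos x hx).ne'
    exact this.congr_deriv (by field_simp; ring)
  intro t ht
  have hsub : Icc 0 t ⊆ Ico 0 T := Icc_subset_Ico_right ht.2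
  have hsub' : Ico 0 t ⊆ Ico 0 T := Ico_subset_Icc_self.trans hsub
  exact constant_of_has_deriv_right_zero (fun x hx => (hF x (hsub hx)).continuousWithinAt.mono hsub)
    (fun x hx => (hF x (hsub' hx)).Ici_of_Ico (hsub' hx)) t ⟨ht.1, le_rfl⟩

end LotkaVolterra

section Asymptotics

variable {α : Type*} {l : Filter α} {u v : α → ℝ}

lemma isLittleO_sub_add_of_lvIntegral_eq {a b K : ℝ} (hu : Tendsto u l atTop)
    (hv : Tendsto v l atTop) (h : ∀ᶠ x in l, lvIntegral a b (u x) (v x) = K) :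
    (fun x => u x - v x) =o[l] fun x => u x + v x := by
  have hu0 := hu.eventually_ge_atTop 0
  have hv0 := hv.eventually_ge_atTop 0
  have huO : u =O[l] fun x => u x + v x := IsBigO.of_bound' <| by
    filter_upwards [hu0, hv0] with x hux hvx
    simp only [norm_eq_abs, abs_of_nonneg hux, abs_of_nonneg (add_nonneg hux hvx)]
    linarith
  have hvO : v =O[l] fun x => u x + v x := IsBigO.of_bound' <| by
    filter_upwards [hu0, hv0] with x hux hvx
    simp only [norm_eq_abs, abs_of_nonneg hvx, abs_of_nonneg (add_nonneg hux hvx)]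
    linarith
  have hK : (fun _ => K) =o[l] fun x => u x + v x :=
    isLittleO_const_left.2 <| Or.inr <| tendsto_norm_atTop_atTop.comp (hu.atTop_add_atTop hv)
  have hlogu := (isLittleO_log_id_atTop.comp_tendsto hu).trans_isBigO huO
  have hlogv := (isLittleO_log_id_atTop.comp_tendsto hv).trans_isBigO hvO
  refine ((hK.add (hlogu.const_mul_left b)).sub (hlogv.const_mul_left a)).congr' ?_ .rfl
  filter_upwards [h] with x hx
  simp only [lvIntegral, Function.comp] at hx ⊢
  linarith

lemma tendsto_div_nhds_one_of_isLittleO_sub_add (hu : ∀ᶠ x in l, 0 < u x)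
    (hv : ∀ᶠ x in l, 0 < v x) (h : (fun x => u x - v x) =o[l] fun x => u x + v x) :
    Tendsto (fun x => u x / v x) l (𝓝 1) := by
  have hw := h.tendsto_div_nhds_zero
  have : Tendsto (fun x => (1 + (u x - v x) / (u x + v x)) / (1 - (u x - v x) / (u x + v x)))
      l (𝓝 ((1 + 0) / (1 - 0))) :=
    (tendsto_const_nhds.add hw).div (tendsto_const_nhds.sub hw) (by norm_num)
  rw [add_zero, sub_zero, div_one] at this
  refine this.congr' ?_
  filter_upwards [hu, hv] with x hux hvx
  rw [one_add_div (by positivity), one_sub_div (by positivity),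
    div_div_div_cancel_right₀ (by positivity)]
  ring

end Asymptotics

/-- Let λ ≠ 0, 0 < T < ∞, and let u, v solve u' = 2λ²·u·(v − (M−N)²),
v' = 2λ²·v·(u − (M+N)²) on [0, T) with u(0) > 0, v(0) > 0 and
u(0)·v(0) > u(0)·(M−N)² + v(0)·(M+N)². If at least one of u, v is unbounded on [0, T),
then u(t) → +∞, v(t) → +∞ and u(t)/v(t) → 1 as t → T⁻. -/
theorem stmt_19 (lam M N : ℝ) (hlam : lam ≠ 0) (T : ℝ) (hT : 0 < T)
    (u v : ℝ → ℝ)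
    (hu : ∀ t ∈ Set.Ico (0 : ℝ) T,
      HasDerivWithinAt u (2 * lam ^ 2 * u t * (v t - (M - N) ^ 2)) (Set.Ico 0 T) t)
    (hv : ∀ t ∈ Set.Ico (0 : ℝ) T,
      HasDerivWithinAt v (2 * lam ^ 2 * v t * (u t - (M + N) ^ 2)) (Set.Ico 0 T) t)
    (hu0 : 0 < u 0) (hv0 : 0 < v 0)
    (hinit : u 0 * (M - N) ^ 2 + v 0 * (M + N) ^ 2 < u 0 * v 0)
    (hblow : ¬ (∃ C : ℝ, ∀ t ∈ Set.Ico (0 : ℝ) T, |u t| ≤ C) ∨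
      ¬ (∃ C : ℝ, ∀ t ∈ Set.Ico (0 : ℝ) T, |v t| ≤ C)) :
    Tendsto u (nhdsWithin T (Set.Iio T)) atTop ∧
      Tendsto v (nhdsWithin T (Set.Iio T)) atTop ∧
      Tendsto (fun t => u t / v t) (nhdsWithin T (Set.Iio T)) (nhds 1) := by
  have hc : 0 < 2 * lam ^ 2 := by positivity
  have ha : 0 ≤ (M - N) ^ 2 := sq_nonneg _
  have hb : 0 ≤ (M + N) ^ 2 := sq_nonneg _
  have hgt := lt_and_lt_of_hasDerivWithinAt hc ha hb hu hv (by nlinarith) (by nlinarith)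
  have hupos t (ht : t ∈ Ico 0 T) : 0 < u t := hb.trans_lt (hgt t ht).1
  have hvpos t (ht : t ∈ Ico 0 T) : 0 < v t := ha.trans_lt (hgt t ht).2
  have hgt' t (ht : t ∈ interior (Ico 0 T)) := hgt t (interior_subset ht)
  have hU : ¬ ∃ C, ∀ t ∈ Ico 0 T, |u t| ≤ C := fun hU =>
    hblow.elim (· hU) (· (exists_abs_le_of_hasDerivWithinAt_mul_sub hv hU))
  have hV : ¬ ∃ C, ∀ t ∈ Ico 0 T, |v t| ≤ C := fun hV =>
    hblow.elim (· (exists_abs_le_of_hasDerivWithinAt_mul_sub hu hV)) (· hV)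
  have huT := (strictMonoOn_of_lt_of_lt hc hb (convex_Ico 0 T) subset_rfl hu
    hgt').monotoneOn.tendsto_nhdsLT_atTop hU
  have hvT := (strictMonoOn_of_lt_of_lt hc ha (convex_Ico 0 T) subset_rfl hv
    fun t ht => (hgt' t ht).symm).monotoneOn.tendsto_nhdsLT_atTop hV
  have hIco : ∀ᶠ t in 𝓝[<] T, t ∈ Ico 0 T :=
    mem_of_superset (Ioo_mem_nhdsLT hT) Ioo_subset_Ico_self
  have hconst := hIco.mono (lvIntegral_eq_of_hasDerivWithinAt hu hv hupos hvpos)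
  exact ⟨huT, hvT, tendsto_div_nhds_one_of_isLittleO_sub_add (hIco.mono hupos) (hIco.mono hvpos)
    (isLittleO_sub_add_of_lvIntegral_eq huT hvT hconst)⟩
end
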